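/- Let X be a proper Hadamard space, r > 0, γ ∈ Is(X), x, y ∈ X and A, B ⊂ ∂X. If (γy, γ^{−1}x) ∈ C_r^-(x,A) × C_r^-(y,B), then L_r(x,γy) ∩ (γB × A) ⊃ {(ζ,ξ) ∈ ∂X×∂X : ξ ∈ O_r^-(x,γy) and ζ ∈ O_r(ξ,x)}. -/

import Mathlib

open Metric MeasureTheory Filter Topology Set
open scoped ENNReal NNReal

noncomputable section

namespace RicksBM

variable {X : Type*} [MetricSpace X]

/-- `σ` is a unit speed geodesic ray (only values at nonnegative times matter). -/
def IsRay (σ : ℝ → X) : Prop :=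
  ∀ s t : ℝ, 0 ≤ s → 0 ≤ t → dist (σ s) (σ t) = |s - t|

/-- Two geodesic rays are asymptotic if they stay at bounded distance. -/
def RaysAsymptotic (σ τ : ℝ → X) : Prop :=
  ∃ C : ℝ, ∀ t : ℝ, 0 ≤ t → dist (σ t) (τ t) ≤ C

/-- The type of unit speed geodesic rays. -/
abbrev Ray (X : Type*) [MetricSpace X] : Type _ := {σ : ℝ → X // IsRay σ}

/-- The space `𝒢` of parametrized geodesic lines, topologized as a subspace of
`C(ℝ, X)` with the compact-open topology. -/
abbrev GeodLine (X : Type*) [MetricSpace X] : Type _ := {v : C(ℝ, X) // Isometry v}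

instance : MeasurableSpace (GeodLine X) := borel _

/-- The geodesic flow on the space of parametrized geodesic lines. -/
def geodFlow (t : ℝ) (v : GeodLine X) : GeodLine X :=
  ⟨⟨fun s => v.1 (s + t), v.1.continuous.comp (by fun_prop)⟩,
    v.2.comp (Isometry.of_dist_eq fun a b => dist_add_right a b t)⟩

/-- Isometries of `X` act on geodesic lines. -/
instance : SMul (X ≃ᵢ X) (GeodLine X) :=
  ⟨fun γ v => ⟨⟨fun t => γ (v.1 t), γ.continuous.comp v.1.continuous⟩, γ.isometry.comp v.2⟩⟩

instance : MulAction (X ≃ᵢ X) (GeodLine X) where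
  one_smul v := Subtype.ext (ContinuousMap.ext fun t => rfl)
  mul_smul γ₁ γ₂ v := Subtype.ext (ContinuousMap.ext fun t => rfl)

/-- `X` is a Hadamard space: complete, geodesic and satisfying the CAT(0)
comparison inequality. -/
structure IsHadamard (X : Type*) [MetricSpace X] : Prop where
  complete : CompleteSpace X
  geodesic : ∀ x y : X, ∃ σ : ℝ → X,
    σ 0 = x ∧ σ (dist x y) = y ∧
    ∀ s ∈ Icc (0:ℝ) (dist x y), ∀ t ∈ Icc (0:ℝ) (dist x y), dist (σ s) (σ t) = |s - t|
  cat0 : ∀ (x y p : X) (σ : ℝ → X),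
    σ 0 = x → σ (dist x y) = y →
    (∀ s ∈ Icc (0:ℝ) (dist x y), ∀ t ∈ Icc (0:ℝ) (dist x y), dist (σ s) (σ t) = |s - t|) →
    ∀ t ∈ Icc (0:ℝ) 1,
      dist p (σ (t * dist x y)) ^ 2
        ≤ (1 - t) * dist p x ^ 2 + t * dist p y ^ 2 - t * (1 - t) * dist x y ^ 2

/-- `X` is geodesically complete: any geodesic segment extends to a full
geodesic line. -/
def GeodesicallyComplete (X : Type*) [MetricSpace X] : Prop :=
  ∀ x y : X, x ≠ y → ∃ (v : GeodLine X) (t : ℝ), v.1 t = x ∧ v.1 (t + dist x y) = y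

/-- The geometric compactification `X̄ = X ∪ ∂X` of a Hadamard space, together
with the assignment of endpoints at infinity to geodesic rays and the Busemann
functions. -/
structure BoundaryData (X : Type*) [MetricSpace X] where
  /-- the compactification `X̄` -/
  Xbar : Type*
  topXbar : TopologicalSpace Xbar
  /-- the inclusion `X → X̄` -/
  incl : X → Xbar
  isOpenEmbedding : Topology.IsOpenEmbedding incl
  denseRange : DenseRange incl
  compactSpace : CompactSpace Xbar
  t2 : T2Space Xbar
  /-- the endpoint at infinity of a geodesic ray -/
  endOfRay : Ray X → Xbar
  endOfRay_notMem : ∀ σ : Ray X, endOfRay σ ∉ Set.range incl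
  endOfRay_tendsto : ∀ σ : Ray X, Tendsto (fun t => incl (σ.1 t)) atTop (𝓝 (endOfRay σ))
  endOfRay_eq_iff : ∀ σ τ : Ray X, (endOfRay σ = endOfRay τ ↔ RaysAsymptotic σ.1 τ.1)
  ray_exists : ∀ p : Xbar, p ∉ Set.range incl → ∀ x : X,
    ∃ σ : Ray X, σ.1 0 = x ∧ endOfRay σ = p
  /-- the Busemann function `B_ξ(x,y)`, for `ξ` a boundary point -/
  busemann : Xbar → X → X → ℝ
  busemann_spec : ∀ (σ : Ray X) (x y : X),
    Tendsto (fun s => dist x (σ.1 s) - dist y (σ.1 s)) atTop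
      (𝓝 (busemann (endOfRay σ) x y))

attribute [instance] BoundaryData.topXbar

variable (D : BoundaryData X)

/-- The geometric boundary `∂X`. -/
abbrev BoundaryData.bdry : Type _ := {p : D.Xbar // p ∉ Set.range D.incl}

noncomputable instance (D : BoundaryData X) : MeasurableSpace D.Xbar := borel _

/-- Endpoint of a ray, as a boundary point. -/
def BoundaryData.endB (σ : Ray X) : D.bdry := ⟨D.endOfRay σ, D.endOfRay_notMem σ⟩

/-- The positive endpoint `v⁺` of a geodesic line. -/
def linePlus (v : GeodLine X) : D.bdry :=
  D.endB ⟨fun t => v.1 t, fun s t _ _ => by rw [v.2.dist_eq, Real.dist_eq]⟩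

/-- The negative endpoint `v⁻` of a geodesic line. -/
def lineMinus (v : GeodLine X) : D.bdry :=
  D.endB ⟨fun t => v.1 (-t), fun s t _ _ => by
    rw [v.2.dist_eq, Real.dist_eq, show -s - -t = t - s by ring, abs_sub_comm]⟩

/-- The pair of endpoints `∂_∞ v = (v⁻, v⁺)` of a geodesic line. -/
def ends (v : GeodLine X) : D.bdry × D.bdry := (lineMinus D v, linePlus D v)

open Classical in
/-- The extension of an isometry of `X` to the geometric boundary. -/
def BoundaryData.act (γ : X ≃ᵢ X) (ξ : D.bdry) : D.bdry :=
  if h : Nonempty X then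
    D.endB ⟨fun t => γ (((D.ray_exists ξ.1 ξ.2 h.some).choose).1 t),
      fun s t hs ht => by
        rw [γ.isometry.dist_eq]
        exact ((D.ray_exists ξ.1 ξ.2 h.some).choose).2 s t hs ht⟩
  else ξ

/-- The width of a geodesic line: the diameter of the set of origins of the
parallel lines with the same endpoints. -/
def width (v : GeodLine X) : ℝ≥0∞ :=
  EMetric.diam {p : X | ∃ u : GeodLine X,
    lineMinus D u = lineMinus D v ∧ linePlus D u = linePlus D v ∧
    D.busemann (lineMinus D v).1 (u.1 0) (v.1 0) = 0 ∧ u.1 0 = p}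

/-- The set of pairs of boundary points joined by a geodesic line. -/
def endpointsAll : Set (D.bdry × D.bdry) :=
  {q | ∃ v : GeodLine X, ends D v = q}

/-- `∂_∞ℛ` : pairs of boundary points joined by a rank one (finite width) line. -/
def endpointsR : Set (D.bdry × D.bdry) :=
  {q | ∃ v : GeodLine X, width D v ≠ ⊤ ∧ ends D v = q}

/-- `∂_∞𝒵` : pairs of boundary points joined by a zero width line. -/
def endpointsZ : Set (D.bdry × D.bdry) :=
  {q | ∃ v : GeodLine X, width D v = 0 ∧ ends D v = q}

/-- The union `(ξη)` of all geodesic lines joining `ξ` to `η`. -/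
def joinSet (ξ η : D.bdry) : Set X :=
  {p | ∃ (v : GeodLine X) (t : ℝ), lineMinus D v = ξ ∧ linePlus D v = η ∧ v.1 t = p}

/-- A geodesic line is `Is(X)`-recurrent. -/
def IsomRecurrent (v : GeodLine X) : Prop :=
  ∃ (g : ℕ → X ≃ᵢ X) (t : ℕ → ℝ), Tendsto t atTop atTop ∧
    Tendsto (fun n => g n • geodFlow (t n) v) atTop (𝓝 v)

/-- A geodesic line is `Γ`-recurrent. -/
def GammaRecurrent (Γ : Subgroup (X ≃ᵢ X)) (v : GeodLine X) : Prop :=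
  ∃ (g : ℕ → Γ) (t : ℕ → ℝ), Tendsto t atTop atTop ∧
    Tendsto (fun n => (g n : X ≃ᵢ X) • geodFlow (t n) v) atTop (𝓝 v)

/-- `∂X^rec`: endpoints of `Is(X)`-recurrent zero width geodesic lines. -/
def recBoundary : Set D.bdry :=
  {η | ∃ v : GeodLine X, width D v = 0 ∧ IsomRecurrent v ∧ linePlus D v = η}
/-- `Γ` is a discrete subgroup of the isometry group: orbits meet balls in
finite sets. -/
def IsDiscreteSubgroup (Γ : Subgroup (X ≃ᵢ X)) : Prop :=
  ∀ (x : X) (R : ℝ), {γ : Γ | dist x ((γ : X ≃ᵢ X) x) ≤ R}.Finite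

/-- The limit set `L_Γ = closure(Γ z) ∩ ∂X` (independent of the basepoint `z`). -/
def limitSet (Γ : Subgroup (X ≃ᵢ X)) (z : X) : Set D.bdry :=
  {ξ | ξ.1 ∈ closure (Set.range fun γ : Γ => D.incl ((γ : X ≃ᵢ X) z))}

/-- The radial limit set of `Γ` (independent of the basepoints `x`, `y`). -/
def radialLimitSet (Γ : Subgroup (X ≃ᵢ X)) (x y : X) : Set D.bdry :=
  {ξ | ∃ c : ℝ, 0 < c ∧ ∃ σ : Ray X, σ.1 0 = x ∧ D.endB σ = ξ ∧
    ∃ (γ : ℕ → Γ) (t : ℕ → ℝ), Tendsto t atTop atTop ∧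
      ∀ n, dist ((γ n : X ≃ᵢ X) y) (σ.1 (t n)) ≤ c}

/-- The critical exponent `δ_Γ` of the Poincaré series (independent of `x`, `y`). -/
def critExp (Γ : Subgroup (X ≃ᵢ X)) (x y : X) : ℝ :=
  sInf {s : ℝ | 0 < s ∧ Summable fun γ : Γ => Real.exp (-s * dist x ((γ : X ≃ᵢ X) y))}

/-- `Γ` is divergent: the Poincaré series diverges at the critical exponent. -/
def IsDivergent (Γ : Subgroup (X ≃ᵢ X)) (x y : X) : Prop :=
  ¬ Summable fun γ : Γ => Real.exp (-(critExp Γ x y) * dist x ((γ : X ≃ᵢ X) y))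

/-- `γ` is axial with translation length `ℓ` and invariant geodesic `v`. -/
def IsAxialWith (γ : X ≃ᵢ X) (ℓ : ℝ) (v : GeodLine X) : Prop :=
  0 < ℓ ∧ γ • v = geodFlow ℓ v

/-- The length spectrum of `Γ`: translation lengths of axial elements. -/
def lengthSpectrum (Γ : Subgroup (X ≃ᵢ X)) : Set ℝ :=
  {ℓ | ∃ γ ∈ Γ, ∃ v : GeodLine X, IsAxialWith γ ℓ v}

/-- The length spectrum is arithmetic: it generates a discrete (hence cyclic)
subgroup of `ℝ`. -/
def HasArithmeticLengthSpectrum (Γ : Subgroup (X ≃ᵢ X)) : Prop :=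
  ∃ a : ℝ, ∀ ℓ ∈ lengthSpectrum Γ, ∃ n : ℤ, ℓ = n * a

/-- `γ` is a rank one isometry: axial, with all invariant geodesics of finite
width. -/
def IsRankOneIsom (γ : X ≃ᵢ X) : Prop :=
  ∃ ℓ : ℝ, 0 < ℓ ∧ (∃ v : GeodLine X, γ • v = geodFlow ℓ v) ∧
    ∀ v : GeodLine X, γ • v = geodFlow ℓ v → width D v ≠ ⊤

/-- `Γ` is a rank one group: it contains two rank one isometries with disjoint
fixed point sets in the boundary. -/
def IsRankOneGroup (Γ : Subgroup (X ≃ᵢ X)) : Prop :=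
  ∃ g h : X ≃ᵢ X, g ∈ Γ ∧ h ∈ Γ ∧ IsRankOneIsom D g ∧ IsRankOneIsom D h ∧
    Disjoint {ξ : D.bdry | D.act g ξ = ξ} {ξ : D.bdry | D.act h ξ = ξ}

/-- `𝒵_Γ ≠ ∅` : there is a zero width geodesic with both endpoints in the
limit set. -/
def ZGammaNonempty (Γ : Subgroup (X ≃ᵢ X)) (z : X) : Prop :=
  ∃ v : GeodLine X, width D v = 0 ∧
    lineMinus D v ∈ limitSet D Γ z ∧ linePlus D v ∈ limitSet D Γ z

open Classical in
/-- The Gromov product `Gr_y(ξ,η)` of two boundary points joined by a geodesic. -/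
def gromov (y : X) (ξ η : D.bdry) : ℝ :=
  if h : (joinSet D ξ η).Nonempty then
    (D.busemann ξ.1 y h.choose + D.busemann η.1 y h.choose) / 2
  else 0

/-- The density `e^{2 δ Gr_x(ξ,η)} 1_{∂_∞ℛ}(ξ,η)` of the Bowen–Margulis
geodesic current with respect to `μ_x ⊗ μ_x`. -/
def bmDensity (δ : ℝ) (x : X) : D.bdry × D.bdry → ℝ≥0∞ :=
  (endpointsR D).indicator fun q => ENNReal.ofReal (Real.exp (2 * δ * gromov D x q.1 q.2))

/-- `(μ_x)` is a `δ`-dimensional `Γ`-invariant conformal density (with limit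
set taken with respect to the basepoint `z`). -/
def IsConformalDensity (Γ : Subgroup (X ≃ᵢ X)) (δ : ℝ) (μ : X → Measure D.bdry)
    (z : X) : Prop :=
  (∀ x : X, IsFiniteMeasure (μ x)) ∧ (∀ x : X, μ x ≠ 0) ∧
  (∀ x : X, μ x ((limitSet D Γ z)ᶜ) = 0) ∧
  (∀ γ : X ≃ᵢ X, γ ∈ Γ → ∀ x : X, ∀ E : Set D.bdry, MeasurableSet E →
      μ (γ x) E = μ x (D.act γ ⁻¹' E)) ∧
  (∀ x y : X, μ x = (μ y).withDensity
      fun η => ENNReal.ofReal (Real.exp (δ * D.busemann η.1 y x)))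

/-- The set of origins of the zero width lines in `E` with endpoint pair `q`. -/
def originSet (E : Set (GeodLine X)) (q : D.bdry × D.bdry) : Set X :=
  {p | ∃ v ∈ E, width D v = 0 ∧ ends D v = q ∧ v.1 0 = p}

/-- `m` is the Ricks measure on `𝒢` associated to the geodesic current `μbar`:
`m(E) = ∫ λ(p(E ∩ 𝒵 ∩ ∂_∞⁻¹(ξ,η))) dμbar(ξ,η)`, the fibrewise length measure
being one-dimensional Hausdorff measure. -/
def IsRicksMeasure [MeasurableSpace X] [BorelSpace X]
    (μbar : Measure (D.bdry × D.bdry)) (m : Measure (GeodLine X)) : Prop :=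
  ∀ E : Set (GeodLine X), MeasurableSet E →
    m E = ∫⁻ q, μH[1] (originSet D E q) ∂μbar

/-- The quotient `Γ\𝒢`. -/
abbrev lineQuot (Γ : Subgroup (X ≃ᵢ X)) : Type _ :=
  Quotient (MulAction.orbitRel Γ (GeodLine X))

/-- The geodesic flow on the quotient `Γ\𝒢`. -/
def flowQuot (Γ : Subgroup (X ≃ᵢ X)) (t : ℝ) : lineQuot Γ → lineQuot Γ :=
  Quotient.map' (geodFlow t) (fun a b hab => by
    obtain ⟨γ, hγ⟩ := hab
    exact ⟨γ, by rw [← hγ]; exact Subtype.ext (ContinuousMap.ext fun s => rfl)⟩)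

/-- `mΓ` is the measure on `Γ\𝒢` obtained as the quotient of the `Γ`-invariant
measure `m` on `𝒢`. -/
def IsQuotientMeasure (Γ : Subgroup (X ≃ᵢ X)) (m : Measure (GeodLine X))
    (mΓ : Measure (lineQuot Γ)) : Prop :=
  ∀ A₀ : Set (GeodLine X), MeasurableSet A₀ →
    Set.InjOn (Quotient.mk (MulAction.orbitRel Γ (GeodLine X))) A₀ →
    mΓ (Quotient.mk (MulAction.orbitRel Γ (GeodLine X)) '' A₀) = m A₀

/-- Mixing of the geodesic flow on `Γ\𝒢` with respect to `mΓ`: for Borel sets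
of finite measure, `mΓ(A ∩ g^{-t}B)` converges, as `t → ±∞`, to
`mΓ(A)·mΓ(B)/‖mΓ‖` (which is `0` when `mΓ` is infinite). -/
def IsMixing (Γ : Subgroup (X ≃ᵢ X)) (mΓ : Measure (lineQuot Γ)) : Prop :=
  ∀ A B : Set (lineQuot Γ), MeasurableSet A → MeasurableSet B →
    mΓ A ≠ ⊤ → mΓ B ≠ ⊤ →
    Tendsto (fun t : ℝ => mΓ (A ∩ flowQuot Γ t ⁻¹' B)) atTop
      (𝓝 (mΓ A * mΓ B / mΓ Set.univ)) ∧
    Tendsto (fun t : ℝ => mΓ (A ∩ flowQuot Γ t ⁻¹' B)) atBot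
      (𝓝 (mΓ A * mΓ B / mΓ Set.univ))
/-- The rays from the point `z` to the boundary point `η`. -/
def raysFromTo (z : X) (η : D.bdry) : Set (ℝ → X) :=
  {σ | ∃ hσ : IsRay σ, σ 0 = z ∧ D.endB ⟨σ, hσ⟩ = η}

/-- The shadow `O_r(ξ, x)` of the ball `B_r(x)` seen from the boundary point `ξ`. -/
def shadow (r : ℝ) (ξ : D.bdry) (x : X) : Set D.bdry :=
  {η | (ξ, η) ∈ endpointsAll D ∧ Metric.infDist x (joinSet D ξ η) < r}

/-- The set `∂̃O_r(ξ,x)` of boundary points joined to `ξ` at distance exactly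
`r` from `x`. -/
def shadowTildeBoundary (r : ℝ) (ξ : D.bdry) (x : X) : Set D.bdry :=
  {η | (ξ, η) ∈ endpointsAll D ∧ Metric.infDist x (joinSet D ξ η) = r}

/-- The large shadow `O_r^+(x, y)`. -/
def largeShadow (r : ℝ) (x y : X) : Set D.bdry :=
  {η | ∃ z ∈ Metric.ball x r, ∃ σ ∈ raysFromTo D z η, ∃ t : ℝ, 0 ≤ t ∧ σ t ∈ Metric.ball y r}

/-- The small shadow `O_r^-(x, y)`. -/
def smallShadow (r : ℝ) (x y : X) : Set D.bdry :=
  {η | ∀ z ∈ Metric.ball x r, ∃ σ ∈ raysFromTo D z η, ∃ t : ℝ, 0 ≤ t ∧ σ t ∈ Metric.ball y r}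

open Classical in
/-- The large shadow with source a point of `X̄` (with the convention
`O_r^±(ξ,x) = O_r(ξ,x)` for boundary sources). -/
def largeShadowBar (r : ℝ) (z : D.Xbar) (x : X) : Set D.bdry :=
  if h : z ∈ Set.range D.incl then largeShadow D r h.choose x
  else shadow D r ⟨z, h⟩ x

open Classical in
/-- The small shadow with source a point of `X̄` (with the convention
`O_r^±(ξ,x) = O_r(ξ,x)` for boundary sources). -/
def smallShadowBar (r : ℝ) (z : D.Xbar) (x : X) : Set D.bdry :=
  if h : z ∈ Set.range D.incl then smallShadow D r h.choose x
  else shadow D r ⟨z, h⟩ x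

/-- The small cone `C_r^-(x, A)`. -/
def smallCone (r : ℝ) (x : X) (A : Set D.bdry) : Set X :=
  {z | largeShadow D r x z ⊆ A}

/-- The large cone `C_r^+(x, A)`. -/
def largeCone (r : ℝ) (x : X) (A : Set D.bdry) : Set X :=
  {z | (largeShadow D r x z ∩ A).Nonempty}

/-- The corridor `L_r(x, y)`. -/
def corridor (r : ℝ) (x y : X) : Set (D.bdry × D.bdry) :=
  {q | ∃ (v : GeodLine X) (t : ℝ), ends D v = q ∧ 0 < t ∧
    v.1 0 ∈ Metric.ball x r ∧ v.1 t ∈ Metric.ball y r}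

/-- The set `K_r(z) = {g^s v(z;ξ,η) : (ξ,η) ∈ ∂_∞𝒵, d(z,(ξη)) < r,
s ∈ (-r/2, r/2)}`. -/
def Kset (r : ℝ) (z : X) : Set (GeodLine X) :=
  {w | width D w = 0 ∧
    Metric.infDist z (joinSet D (lineMinus D w) (linePlus D w)) < r ∧
    ∃ s : ℝ, |s| < r / 2 ∧
      dist z (w.1 (-s)) = Metric.infDist z (joinSet D (lineMinus D w) (linePlus D w))}

/-- `K_r^+(x, A)`. -/
def KsetPlus (r : ℝ) (x : X) (A : Set D.bdry) : Set (GeodLine X) :=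
  {w ∈ Kset D r x | linePlus D w ∈ A}

/-- `K_r^-(y, B)`. -/
def KsetMinus (r : ℝ) (y : X) (B : Set D.bdry) : Set (GeodLine X) :=
  {w ∈ Kset D r y | lineMinus D w ∈ B}

open Classical in
/-- The orbital measures `ν_{x,y}^T = δ_Γ e^{-δ_Γ T} Σ_{γ ∈ Γ, d(x,γy) ≤ T}
D_{γ y} ⊗ D_{γ^{-1} x}` on `X̄ × X̄`. -/
def nuT (Γ : Subgroup (X ≃ᵢ X)) (δ : ℝ) (x y : X) (T : ℝ) :
    Measure (D.Xbar × D.Xbar) :=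
  (ENNReal.ofReal (δ * Real.exp (-δ * T))) •
    Measure.sum (fun γ : Γ =>
      if dist x ((γ : X ≃ᵢ X) y) ≤ T then
        Measure.dirac (D.incl ((γ : X ≃ᵢ X) y), D.incl ((γ : X ≃ᵢ X).symm x))
      else 0)

/-- `(ξ₁, ξ₂, ξ₃, ξ₄)` is a quadrilateral. -/
def IsQuadrilateral (ξ₁ ξ₂ ξ₃ ξ₄ : D.bdry) : Prop :=
  (ξ₁, ξ₃) ∈ endpointsR D ∧ (ξ₁, ξ₄) ∈ endpointsR D ∧
  (ξ₂, ξ₃) ∈ endpointsR D ∧ (ξ₂, ξ₄) ∈ endpointsR D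

/-- The cross-ratio of a quadrilateral `(ξ, ξ', η, η')` with respect to the
basepoint `o`. -/
def crossRatio (o : X) (ξ ξ' η η' : D.bdry) : ℝ :=
  gromov D o ξ η + gromov D o ξ' η' - gromov D o ξ η' - gromov D o ξ' η

/-- A quasi-product geodesic current: a `Γ`-invariant Radon measure on
`∂_∞ℛ ⊆ ∂X × ∂X` absolutely continuous with respect to `(μ₋ ⊗ μ₊)|_{∂_∞ℛ}`. -/
def IsQuasiProductCurrent (Γ : Subgroup (X ≃ᵢ X)) (μm μp : Measure D.bdry)
    (μbar : Measure (D.bdry × D.bdry)) : Prop :=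
  (∀ γ : X ≃ᵢ X, γ ∈ Γ → ∀ E : Set (D.bdry × D.bdry), MeasurableSet E →
      μbar ((fun q : D.bdry × D.bdry => (D.act γ q.1, D.act γ q.2)) ⁻¹' E) = μbar E) ∧
  μbar ((endpointsR D)ᶜ) = 0 ∧
  μbar ≪ (μm.prod μp).restrict (endpointsR D) ∧
  (∀ K : Set (D.bdry × D.bdry), K ⊆ endpointsR D → IsCompact K → μbar K ≠ ⊤)

/-- The constant `Δ = sup_{R>0} ln(μbar(∂_∞ℬ(R)))/R` is finite, `o` being the
fixed basepoint. -/
def DeltaFinite (μbar : Measure (D.bdry × D.bdry)) (o : X) : Prop :=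
  ∃ Δ : ℝ, ∀ R : ℝ, 0 < R →
    μbar (ends D '' {v : GeodLine X | dist (v.1 0) o < R})
      ≤ ENNReal.ofReal (Real.exp (Δ * R))

/-- The orbit counting function `N_Γ(R) = #{γ ∈ Γ : d(x, γy) ≤ R}`. -/
def orbitCount (Γ : Subgroup (X ≃ᵢ X)) (x y : X) (R : ℝ) : ℕ :=
  Nat.card {γ : Γ // dist x ((γ : X ≃ᵢ X) y) ≤ R}

/-- Map a geodesic ray by an isometry. -/
def mapRay (γ : X ≃ᵢ X) (σ : Ray X) : Ray X :=
  ⟨fun t => γ (σ.1 t), fun s t hs ht => by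
    rw [γ.isometry.dist_eq]; exact σ.2 s t hs ht⟩

lemma endB_eq_linePlus (v : GeodLine X) (σ : Ray X) (c : ℝ)
    (hfun : ∀ u, 0 ≤ u → σ.1 u = v.1 (c + u)) :
    D.endB σ = linePlus D v := by
  apply Subtype.ext
  apply (D.endOfRay_eq_iff σ _).mpr
  refine ⟨|c|, fun u hu => ?_⟩
  rw [hfun u hu]
  show dist (v.1 (c + u)) (v.1 u) ≤ |c|
  rw [v.2.dist_eq, Real.dist_eq, show c + u - u = c by ring]

lemma endB_eq_lineMinus (v : GeodLine X) (σ : Ray X) (c : ℝ)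
    (hfun : ∀ u, 0 ≤ u → σ.1 u = v.1 (c - u)) :
    D.endB σ = lineMinus D v := by
  apply Subtype.ext
  apply (D.endOfRay_eq_iff σ _).mpr
  refine ⟨|c|, fun u hu => ?_⟩
  rw [hfun u hu]
  show dist (v.1 (c - u)) (v.1 (-u)) ≤ |c|
  rw [v.2.dist_eq, Real.dist_eq, show c - u - -u = c by ring]

/-- In a CAT(0) space, two asymptotic rays with the same origin coincide. -/
lemma ray_unique (hHad : IsHadamard X) {σ τ : ℝ → X} (hσ : IsRay σ) (hτ : IsRay τ)
    (h0 : σ 0 = τ 0) (hCas : RaysAsymptotic σ τ) {t : ℝ} (ht : 0 ≤ t) : σ t = τ t := by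
  obtain ⟨C, hC⟩ := hCas
  have hC0 : 0 ≤ C := le_trans dist_nonneg (hC 0 le_rfl)
  have key : ∀ s : ℝ, t ≤ s → 0 < s → dist (σ t) (τ t) ≤ t * C / s := by
    intro s hts hs
    have hl0 : 0 ≤ t / s := div_nonneg ht hs.le
    have hl1 : t / s ≤ 1 := (div_le_one hs).mpr hts
    have hls : t / s * s = t := div_mul_cancel₀ t hs.ne'
    have hdτ : dist (τ 0) (τ s) = s := by
      rw [hτ 0 s le_rfl hs.le, zero_sub, abs_neg, abs_of_nonneg hs.le]
    have hdσ : dist (σ 0) (σ s) = s := by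
      rw [hσ 0 s le_rfl hs.le, zero_sub, abs_neg, abs_of_nonneg hs.le]
    have hA := hHad.cat0 (τ 0) (τ s) (σ s) τ rfl (by rw [hdτ])
      (fun a ha b hb => hτ a b ha.1 hb.1) (t / s) ⟨hl0, hl1⟩
    rw [hdτ, hls] at hA
    have hB := hHad.cat0 (σ 0) (σ s) (τ t) σ rfl (by rw [hdσ])
      (fun a ha b hb => hσ a b ha.1 hb.1) (t / s) ⟨hl0, hl1⟩
    rw [hdσ, hls] at hB
    have h1 : dist (σ s) (τ 0) = s := by
      rw [← h0, hσ s 0 hs.le le_rfl, sub_zero, abs_of_nonneg hs.le]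
    have h2 : dist (τ t) (σ 0) = t := by
      rw [h0, hτ t 0 ht le_rfl, sub_zero, abs_of_nonneg ht]
    rw [h1] at hA
    rw [h2, dist_comm (τ t) (σ s)] at hB
    have hes : dist (σ s) (τ s) ≤ C := hC s hs.le
    have he2 : dist (σ s) (τ s) ^ 2 ≤ C ^ 2 := by
      have := mul_self_le_mul_self dist_nonneg hes
      simpa [pow_two] using this
    have ht2 : t ^ 2 = (t / s) * (t / s) * s ^ 2 := by
      field_simp
    have hsq : dist (τ t) (σ t) ^ 2 ≤ (t / s * C) ^ 2 := by
      nlinarith [mul_le_mul_of_nonneg_left hA hl0,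
        mul_le_mul_of_nonneg_left he2 (mul_nonneg hl0 hl0)]
    have hd : dist (τ t) (σ t) ≤ t / s * C := by
      have h' := Real.sqrt_le_sqrt hsq
      rwa [Real.sqrt_sq dist_nonneg, Real.sqrt_sq (mul_nonneg hl0 hC0)] at h'
    rw [dist_comm]
    calc dist (τ t) (σ t) ≤ t / s * C := hd
      _ = t * C / s := by ring
  have hT : Tendsto (fun s : ℝ => t * C / s) atTop (𝓝 0) :=
    tendsto_const_nhds.div_atTop tendsto_id
  have hle : dist (σ t) (τ t) ≤ 0 := by
    refine ge_of_tendsto hT ?_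
    filter_upwards [eventually_ge_atTop (max t 1)] with s hs
    exact key s (le_trans (le_max_left _ _) hs)
      (lt_of_lt_of_le one_pos (le_trans (le_max_right _ _) hs))
  exact dist_le_zero.mp hle

lemma act_endB (γ : X ≃ᵢ X) (σ : Ray X) (hX : Nonempty X) :
    D.act γ (D.endB σ) = D.endB (mapRay γ σ) := by
  unfold BoundaryData.act
  rw [dif_pos hX]
  apply Subtype.ext
  apply (D.endOfRay_eq_iff _ _).mpr
  have hspec := (D.ray_exists (D.endB σ).1 (D.endB σ).2 hX.some).choose_spec
  have heq : D.endOfRay (D.ray_exists (D.endB σ).1 (D.endB σ).2 hX.some).choose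
      = D.endOfRay σ := hspec.2
  obtain ⟨C, hC⟩ := (D.endOfRay_eq_iff _ _).mp heq
  refine ⟨C, fun u hu => ?_⟩
  show dist (γ _) (γ _) ≤ C
  rw [γ.isometry.dist_eq]
  exact hC u hu

lemma act_act (γ : X ≃ᵢ X) (ζ : D.bdry) (x : X) :
    D.act γ (D.act γ.symm ζ) = ζ := by
  obtain ⟨σ, hσ0, hσe⟩ := D.ray_exists ζ.1 ζ.2 x
  have hζ : D.endB σ = ζ := Subtype.ext hσe
  have hX : Nonempty X := ⟨x⟩
  rw [← hζ, act_endB D γ.symm σ hX, act_endB D γ _ hX]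
  congr 1
  exact Subtype.ext (funext fun t => γ.apply_symm_apply _)

/-- If `(γy, γ⁻¹x) ∈ C_r^-(x,A) × C_r^-(y,B)`, then
`L_r(x,γy) ∩ (γB × A)` contains all pairs `(ζ,ξ)` with `ξ ∈ O_r^-(x,γy)` and
`ζ ∈ O_r(ξ,x)`. -/
theorem small_cones_give_corridor
    {X : Type*} [MetricSpace X] [ProperSpace X]
    (hHad : IsHadamard X) (D : BoundaryData X)
    (r : ℝ) (hr : 0 < r) (γ : X ≃ᵢ X) (x y : X) (A B : Set D.bdry)
    (h₁ : γ y ∈ smallCone D r x A) (h₂ : γ.symm x ∈ smallCone D r y B) :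
    ∀ ζ ξ : D.bdry, ξ ∈ smallShadow D r x (γ y) → ζ ∈ shadow D r ξ x →
      (ζ, ξ) ∈ corridor D r x (γ y) ∧ ζ ∈ D.act γ '' B ∧ ξ ∈ A := by
  intro ζ ξ hξ hζ
  have hX : Nonempty X := ⟨x⟩
  obtain ⟨hall, hinf⟩ := hζ
  obtain ⟨v₀, hv₀⟩ := hall
  have hne : (joinSet D ξ ζ).Nonempty := by
    exact ⟨v₀.1 0, v₀, 0, congrArg Prod.fst hv₀, congrArg Prod.snd hv₀, rfl⟩
  obtain ⟨p, hp_mem, hp_lt⟩ := (Metric.infDist_lt_iff hne).mp hinf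
  obtain ⟨v, t₀, hvm, hvp, hvt⟩ := hp_mem
  -- the reversed geodesic line w, with w 0 = v t₀ near x
  have hwiso : Isometry (fun s => v.1 (t₀ - s)) := Isometry.of_dist_eq fun a b => by
    rw [v.2.dist_eq, Real.dist_eq, Real.dist_eq,
      show t₀ - a - (t₀ - b) = -(a - b) by ring, abs_neg]
  set w : GeodLine X := ⟨⟨fun s => v.1 (t₀ - s), hwiso.continuous⟩, hwiso⟩ with hw
  have hw0 : w.1 0 = v.1 t₀ := by show v.1 (t₀ - 0) = v.1 t₀; rw [sub_zero]
  have hw0ball : w.1 0 ∈ Metric.ball x r := by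
    rw [Metric.mem_ball, hw0, hvt, dist_comm]; exact hp_lt
  have hwminus : lineMinus D w = ζ := by
    rw [← hvp]
    unfold lineMinus
    refine endB_eq_linePlus D v _ t₀ (fun u hu => ?_)
    show v.1 (t₀ - -u) = v.1 (t₀ + u)
    rw [sub_neg_eq_add]
  have hwplus : linePlus D w = ξ := by
    rw [← hvm]
    unfold linePlus
    exact endB_eq_lineMinus D v _ t₀ (fun u hu => rfl)
  -- the positive ray of w
  have hτray : IsRay (fun s => w.1 s) := fun a b _ _ => by
    show dist (w.1 a) (w.1 b) = |a - b|
    rw [w.2.dist_eq, Real.dist_eq]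
  have hτend : D.endB ⟨fun s => w.1 s, hτray⟩ = ξ := by
    rw [← hvm]
    exact endB_eq_lineMinus D v _ t₀ (fun u hu => rfl)
  -- apply the small shadow hypothesis at w 0
  obtain ⟨σ, hσmem, t', ht'0, ht'ball⟩ := hξ (w.1 0) hw0ball
  obtain ⟨hσray, hσ0, hσend⟩ := hσmem
  have hasym : RaysAsymptotic σ (fun s => w.1 s) :=
    (D.endOfRay_eq_iff ⟨σ, hσray⟩ ⟨fun s => w.1 s, hτray⟩).mp
      (Subtype.ext_iff.mp (hσend.trans hτend.symm))
  have hσw : ∀ u, 0 ≤ u → σ u = w.1 u := fun u hu =>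
    ray_unique hHad hσray hτray hσ0 hasym hu
  have hwt' : w.1 t' ∈ Metric.ball (γ y) r := hσw t' ht'0 ▸ ht'ball
  obtain ⟨T, hT0, hTball⟩ : ∃ T : ℝ, 0 < T ∧ w.1 T ∈ Metric.ball (γ y) r := by
    rcases ht'0.lt_or_eq with h | h
    · exact ⟨t', h, hwt'⟩
    · rw [← h] at hwt'
      have hd : dist (w.1 0) (γ y) < r := hwt'
      refine ⟨(r - dist (w.1 0) (γ y)) / 2, by linarith, ?_⟩
      have hdd : dist (w.1 ((r - dist (w.1 0) (γ y)) / 2)) (w.1 0)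
          = (r - dist (w.1 0) (γ y)) / 2 := by
        rw [w.2.dist_eq, Real.dist_eq, sub_zero, abs_of_nonneg (by linarith)]
      have := dist_triangle (w.1 ((r - dist (w.1 0) (γ y)) / 2)) (w.1 0) (γ y)
      rw [Metric.mem_ball]
      rw [hdd] at this
      linarith
  have hcor : (ζ, ξ) ∈ corridor D r x (γ y) := by
    refine ⟨w, T, ?_, hT0, hw0ball, hTball⟩
    unfold ends
    rw [hwminus, hwplus]
  have hAmem : ξ ∈ A := h₁ ⟨x, Metric.mem_ball_self hr, hξ x (Metric.mem_ball_self hr)⟩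
  -- the ray from w T backwards to ζ
  have hρray : IsRay (fun s => w.1 (T - s)) := fun a b _ _ => by
    show dist (w.1 (T - a)) (w.1 (T - b)) = |a - b|
    rw [w.2.dist_eq, Real.dist_eq, show T - a - (T - b) = -(a - b) by ring, abs_neg]
  have hρend : D.endB ⟨fun s => w.1 (T - s), hρray⟩ = ζ := by
    rw [← hvp]
    refine endB_eq_linePlus D v _ (t₀ - T) (fun u hu => ?_)
    show v.1 (t₀ - (T - u)) = v.1 (t₀ - T + u)
    rw [show t₀ - (T - u) = t₀ - T + u by ring]
  have hσ'ray : IsRay (fun s => γ.symm (w.1 (T - s))) := fun a b _ _ => by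
    show dist (γ.symm (w.1 (T - a))) (γ.symm (w.1 (T - b))) = |a - b|
    rw [IsometryEquiv.dist_eq, w.2.dist_eq, Real.dist_eq,
      show T - a - (T - b) = -(a - b) by ring, abs_neg]
  have hray_eq : (⟨fun s => γ.symm (w.1 (T - s)), hσ'ray⟩ : Ray X)
      = mapRay γ.symm ⟨fun s => w.1 (T - s), hρray⟩ := Subtype.ext rfl
  have hσ'end : D.endB ⟨fun s => γ.symm (w.1 (T - s)), hσ'ray⟩ = D.act γ.symm ζ := by
    rw [hray_eq, ← act_endB D γ.symm _ hX, hρend]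
  have hmem : D.act γ.symm ζ ∈ largeShadow D r y (γ.symm x) := by
    refine ⟨γ.symm (w.1 T), ?_, fun s => γ.symm (w.1 (T - s)),
      ⟨hσ'ray, ?_, hσ'end⟩, T, hT0.le, ?_⟩
    · rw [Metric.mem_ball, show y = γ.symm (γ y) from (γ.symm_apply_apply y).symm,
        IsometryEquiv.dist_eq]
      exact hTball
    · show γ.symm (w.1 (T - 0)) = γ.symm (w.1 T)
      rw [sub_zero]
    · show dist (γ.symm (w.1 (T - T))) (γ.symm x) < r
      rw [sub_self, IsometryEquiv.dist_eq]
      exact hw0ball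
  exact ⟨hcor, ⟨D.act γ.symm ζ, h₂ hmem, act_act D γ ζ x⟩, hAmem⟩

end RicksBM
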